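/- Let 𝔇 be a direct category and 𝔈 a cocomplete category equipped with two classes of maps (L, R) such that every map in L has the left lifting property with respect to every map in R. Define L^𝔇 to be the class of natural transformations α : X → Y in the functor category [𝔇, 𝔈] whose latching map L̂_d(α) : X(d) ⨿_{L_d(X)} L_d(Y) → Y(d) lies in L for every object d of 𝔇, and R^𝔇 the class of natural transformations α such that α_d ∈ R for every d. Then every map in L^𝔇 has the left lifting property with respect to every map in R^𝔇. -/

import Mathlib

open CategoryTheory Opposite

namespace GPaper

/-! ## The globe category and its truncations

The globe category `𝔾` is the quotient of the free category on the graph with two arrows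
`σ_k, τ_k : k → k+1` by the coglobular relations `σ∘σ = τ∘σ`, `σ∘τ = τ∘τ`.  Concretely, a
non-identity morphism `m ⟶ p` (for `m < p`) is uniquely determined by whether its first letter
is a cosource (`false`) or a cotarget (`true`); we use this normal form as the definition. -/

inductive GlobHom : ℕ → ℕ → Type where
  | id (m : ℕ) : GlobHom m m
  | gen (b : Bool) {m p : ℕ} (h : m < p) : GlobHom m p

def GlobHom.comp : ∀ {m p q : ℕ}, GlobHom m p → GlobHom p q → GlobHom m q
  | _, _, _, .id _, g => g
  | _, _, _, f, .id _ => f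
  | _, _, _, .gen b h, .gen _ h' => .gen b (h.trans h')

/-- Objects of the `n`-truncated globe category `𝔾_n` (`n = ⊤` gives the full globe category). -/
structure Gle (n : ℕ∞) where
  val : ℕ
  isLe : (val : ℕ∞) ≤ n

theorem Gle.ext' {n : ℕ∞} {a b : Gle n} (h : a.val = b.val) : a = b := by
  cases a; cases b; cases h; rfl

theorem GlobHom.id_comp' : ∀ {m p : ℕ} (f : GlobHom m p), (GlobHom.id m).comp f = f := by
  intro m p f; cases f <;> rfl

theorem GlobHom.comp_id' : ∀ {m p : ℕ} (f : GlobHom m p), f.comp (GlobHom.id p) = f := by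
  intro m p f; cases f <;> rfl

theorem GlobHom.assoc' : ∀ {m p q r : ℕ} (f : GlobHom m p) (g : GlobHom p q) (h : GlobHom q r),
    (f.comp g).comp h = f.comp (g.comp h) := by
  intro m p q r f g h; cases f <;> cases g <;> cases h <;> rfl

instance (n : ℕ∞) : Category (Gle n) where
  Hom a b := GlobHom a.val b.val
  id a := GlobHom.id a.val
  comp f g := f.comp g
  id_comp f := GlobHom.id_comp' f
  comp_id f := GlobHom.comp_id' f
  assoc f g h := GlobHom.assoc' f g h

variable {n : ℕ∞}

/-- The cosource map `σ : a → b`. -/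
def sg {a b : Gle n} (h : a.val < b.val) : a ⟶ b := GlobHom.gen false h
/-- The cotarget map `τ : a → b`. -/
def tg {a b : Gle n} (h : a.val < b.val) : a ⟶ b := GlobHom.gen true h
/-- The cosource map, or the identity if the dimensions agree. -/
def sge {a b : Gle n} (h : a.val ≤ b.val) : a ⟶ b :=
  if e : a.val = b.val then eqToHom (Gle.ext' e) else sg (lt_of_le_of_ne h e)
/-- The cotarget map, or the identity if the dimensions agree. -/
def tge {a b : Gle n} (h : a.val ≤ b.val) : a ⟶ b :=
  if e : a.val = b.val then eqToHom (Gle.ext' e) else tg (lt_of_le_of_ne h e)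

/-- `k` is an allowed dimension for the truncation parameter `n`. -/
def inR (n : ℕ∞) (k : ℕ) : Prop := (k : ℕ∞) ≤ n

/-! ## Tables of dimensions

A table of dimensions `(i₁, …, i_q ; i'₁, …, i'_{q-1})` with `i'_k < i_k`, `i'_k < i_{k+1}`
is stored as the first top entry together with a list of pairs (separator, next top entry). -/

def TV (n : ℕ∞) : ℕ → List (ℕ × ℕ) → Prop
  | h, [] => inR n h
  | h, (i', j) :: l => inR n h ∧ i' < h ∧ i' < j ∧ TV n j l

theorem TV.headLe : ∀ {h : ℕ} {l : List (ℕ × ℕ)}, TV n h l → inR n h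
  | _, [], v => v
  | _, (_, _) :: _, v => v.1

theorem TV.midLe {h i' j : ℕ} {l : List (ℕ × ℕ)} (v : TV n h ((i', j) :: l)) : inR n i' :=
  le_trans (Nat.cast_le.mpr (le_of_lt v.2.1)) v.1

/-- A table of dimensions, with all entries bounded by `n`. -/
structure DimTable (n : ℕ∞) where
  head : ℕ
  rest : List (ℕ × ℕ)
  valid : TV n head rest

def maxL (l : List (ℕ × ℕ)) : ℕ := l.foldr (fun p a => max p.2 a) 0

/-- The dimension of a table: the maximum of its top entries. -/
def DimTable.dim (T : DimTable n) : ℕ := max T.head (maxL T.rest)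

/-! ## Families indexed by the zig-zag of a table -/

/-- A family of points, one for each top entry of a table. -/
def Pts (P : Gle n → Type) : ∀ (h : ℕ) (l : List (ℕ × ℕ)), TV n h l → Type
  | h, [], v => P ⟨h, v⟩
  | h, (_, j) :: l, v => P ⟨h, v.1⟩ × Pts P j l v.2.2.2

def Pts.head {P : Gle n → Type} : ∀ {h l v}, Pts P h l v → P ⟨h, TV.headLe v⟩
  | _, [], _, x => x
  | _, _ :: _, _, x => x.1

def Pts.mapP {P Q : Gle n → Type} (φ : ∀ g : Gle n, P g → Q g) :
    ∀ {h l v}, Pts P h l v → Pts Q h l v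
  | _, [], _, x => φ _ x
  | _, _ :: _, _, x => (φ _ x.1, Pts.mapP φ x.2)

def Pts.setHead {P : Gle n → Type} : ∀ {h l v}, Pts P h l v → P ⟨h, TV.headLe v⟩ → Pts P h l v
  | _, [], _, _, y => y
  | _, _ :: _, _, x, y => (y, x.2)

def Pts.toSet {P : Gle n → Type} : ∀ {h l v}, Pts P h l v → Set (Σ g : Gle n, P g)
  | h, [], v, x => {⟨⟨h, v⟩, x⟩}
  | h, _ :: _, v, x => insert ⟨⟨h, v.1⟩, x.1⟩ (Pts.toSet x.2)

/-- Compatibility of a family with the zig-zag maps of the table, relative to a pair of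
"restriction along σ" and "restriction along τ" operations. -/
def PtsOk {P : Gle n → Type} (rS rT : ∀ (a b : Gle n), a.val < b.val → P b → P a) :
    ∀ {h l v}, Pts P h l v → Prop
  | _, [], _, _ => True
  | h, (i', j) :: l, v, x =>
      rS ⟨i', TV.midLe v⟩ ⟨h, v.1⟩ v.2.1 x.1 =
        rT ⟨i', TV.midLe v⟩ ⟨j, TV.headLe v.2.2.2⟩ v.2.2.1 (Pts.head x.2) ∧
      PtsOk rS rT x.2

theorem Pts.mapP_mapP {P Q R : Gle n → Type} (φ : ∀ g, P g → Q g) (ψ : ∀ g, Q g → R g) :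
    ∀ {h l v} (x : Pts P h l v),
      Pts.mapP ψ (Pts.mapP φ x) = Pts.mapP (fun g a => ψ g (φ g a)) x
  | _, [], _, _ => rfl
  | _, _ :: _, _, x => by
      simp only [Pts.mapP]
      exact congrArg _ (Pts.mapP_mapP φ ψ x.2)

theorem Pts.mapP_ext {P Q : Gle n → Type} {φ ψ : ∀ g, P g → Q g}
    (h : ∀ g a, φ g a = ψ g a) :
    ∀ {h' l v} (x : Pts P h' l v), Pts.mapP φ x = Pts.mapP ψ x
  | _, [], _, x => h _ x
  | _, _ :: _, _, x => by
      simp only [Pts.mapP]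
      exact congrArg₂ _ (h _ x.1) (Pts.mapP_ext h x.2)
/-! ## Globular sums and globular theories

Following the skeletal description of `Θ₀` (objects = tables of dimensions), a globular
theory is a category equipped with a coglobular object, a chosen colimit cocone ("globular
sum") for the zig-zag diagram of every table, such that the resulting assignment
`table ↦ apex` is bijective on objects (this encodes a bijective-on-objects, globular sums
preserving functor out of `Θ₀`). -/

/-- A cocone on the zig-zag of globes determined by a table `T`, with respect to a coglobular
object `G`. -/
structure SCone {C : Type*} [Category C] (G : Gle n ⥤ C) (T : DimTable n) where
  pt : C
  legs : Pts (fun g => G.obj g ⟶ pt) T.head T.rest T.valid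
  ok : PtsOk (fun a b hab f => G.map (sg hab) ≫ f) (fun a b hab f => G.map (tg hab) ≫ f) legs

/-- Post-composition of the legs of a cocone with a morphism out of its apex. -/
def SCone.post {C : Type*} [Category C] {G : Gle n ⥤ C} {T : DimTable n} (c : SCone G T)
    {X : C} (u : c.pt ⟶ X) : Pts (fun g => G.obj g ⟶ X) T.head T.rest T.valid :=
  Pts.mapP (fun _ f => f ≫ u) c.legs

/-- The cocone is a colimit of the zig-zag diagram. -/
def IsSColim {C : Type*} [Category C] {G : Gle n ⥤ C} {T : DimTable n} (c : SCone G T) : Prop :=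
  ∀ (X : C) (fs : Pts (fun g => G.obj g ⟶ X) T.head T.rest T.valid),
    PtsOk (fun a b hab f => G.map (sg hab) ≫ f) (fun a b hab f => G.map (tg hab) ≫ f) fs →
    ∃! u : c.pt ⟶ X, c.post u = fs

/-- An `n`-globular theory. -/
structure GlobTheory (n : ℕ∞) : Type 2 where
  E : Type 1
  [cat : Category.{0} E]
  G : Gle n ⥤ E
  sum : ∀ T : DimTable n, SCone G T
  isColim : ∀ T : DimTable n, IsSColim (sum T)
  obj_bij : Function.Bijective (fun T : DimTable n => (sum T).pt)

attribute [instance] GlobTheory.cat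

/-- The globe `D_k` of the theory. -/
def GlobTheory.D (Th : GlobTheory n) (k : ℕ) (hk : inR n k) : Th.E := Th.G.obj ⟨k, hk⟩

/-! ## Models of a globular theory -/

/-- The set of `g`-cells of a presheaf on the theory. -/
def cellP (Th : GlobTheory n) (X : Th.Eᵒᵖ ⥤ Type) (g : Gle n) : Type := X.obj (op (Th.G.obj g))

/-- Restriction along the cosource maps. -/
def resS (Th : GlobTheory n) (X : Th.Eᵒᵖ ⥤ Type) (a b : Gle n) (hab : a.val < b.val) :
    cellP Th X b → cellP Th X a := X.map (op (Th.G.map (sg hab)))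

/-- Restriction along the cotarget maps. -/
def resT (Th : GlobTheory n) (X : Th.Eᵒᵖ ⥤ Type) (a b : Gle n) (hab : a.val < b.val) :
    cellP Th X b → cellP Th X a := X.map (op (Th.G.map (tg hab)))

/-- A presheaf on the theory is a model if it sends every globular sum to the corresponding
limit: compatible families of cells indexed by a table correspond bijectively to cells of
shape the globular sum of that table. -/
def IsModel (Th : GlobTheory n) (X : Th.Eᵒᵖ ⥤ Type) : Prop :=
  ∀ T : DimTable n,
    ∀ fam : Pts (cellP Th X) T.head T.rest T.valid,
      PtsOk (resS Th X) (resT Th X) fam →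
      ∃! y : X.obj (op (Th.sum T).pt),
        Pts.mapP (fun _ leg => X.map leg.op y) (Th.sum T).legs = fam

/-- The category of models of a globular theory. -/
def Mod (Th : GlobTheory n) := ObjectProperty.FullSubcategory (IsModel Th)

instance (Th : GlobTheory n) : Category (Mod Th) :=
  show Category (ObjectProperty.FullSubcategory _) from inferInstance

/-- Representable presheaves are models. -/
theorem isModel_yoneda (Th : GlobTheory n) (A : Th.E) : IsModel Th (yoneda.obj A) :=
  fun T fam hfam => Th.isColim T A fam hfam

/-- The representable model on an object of the theory. -/
def dModA (Th : GlobTheory n) (A : Th.E) : Mod Th := ⟨yoneda.obj A, isModel_yoneda Th A⟩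

/-- The representable model `D_g` on a globe. -/
def dMod (Th : GlobTheory n) (g : Gle n) : Mod Th := dModA Th (Th.G.obj g)

/-- The source map `σ : D_j → D_k` of representable models. -/
def sgMod (Th : GlobTheory n) {a b : Gle n} (h : a.val < b.val) : dMod Th a ⟶ dMod Th b :=
  ObjectProperty.homMk (yoneda.map (Th.G.map (sg h)))

/-- The target map `τ : D_j → D_k` of representable models. -/
def tgMod (Th : GlobTheory n) {a b : Gle n} (h : a.val < b.val) : dMod Th a ⟶ dMod Th b :=
  ObjectProperty.homMk (yoneda.map (Th.G.map (tg h)))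

/-- The `g`-cells of a model. -/
def cl {Th : GlobTheory n} (X : Mod Th) (g : Gle n) : Type := cellP Th X.obj g

/-- Action of a morphism of models on cells. -/
def fapp {Th : GlobTheory n} {X Y : Mod Th} (f : X ⟶ Y) (g : Gle n) : cl X g → cl Y g :=
  f.hom.app (op (Th.G.obj g))

/-- The (iterated) source of a cell. -/
def csrc {Th : GlobTheory n} {X : Mod Th} {a b : Gle n} (h : a.val < b.val) :
    cl X b → cl X a := resS Th X.obj a b h

/-- The (iterated) target of a cell. -/
def ctgt {Th : GlobTheory n} {X : Mod Th} {a b : Gle n} (h : a.val < b.val) :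
    cl X b → cl X a := resT Th X.obj a b h

/-- Two cells of the same dimension are parallel if their sources and targets agree
(vacuously true in dimension `0`). -/
def Par {Th : GlobTheory n} {X : Mod Th} {k : Gle n} (x y : cl X k) : Prop :=
  ∀ (j : Gle n) (hj : j.val + 1 = k.val),
    csrc (show j.val < k.val by omega) x = csrc (show j.val < k.val by omega) y ∧
    ctgt (show j.val < k.val by omega) x = ctgt (show j.val < k.val by omega) y

/-! ## Lifting properties, (trivial) cofibrations and fibrations, weak equivalences -/

/-- Existence of diagonal fillers for all commutative squares with left leg `l`
and right leg `r`. -/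
def SqLift {Th : GlobTheory n} {A B P Q : Mod Th} (l : A ⟶ B) (r : P ⟶ Q) : Prop :=
  ∀ (u : A ⟶ P) (v : B ⟶ Q), u ≫ r = l ≫ v → ∃ d : B ⟶ P, l ≫ d = u ∧ d ≫ r = v

/-- `f` is a trivial fibration: it has the right lifting property with respect to the set
`I` of boundary inclusions `S^{k-1} → D_k` (for `k ≤ n`), together with, for finite `n`,
the collapse map `(1,1) : Sⁿ → Dⁿ`.  This is expressed elementwise via the universal
property of the sphere objects. -/
def InjI {Th : GlobTheory n} {X Y : Mod Th} (f : X ⟶ Y) : Prop :=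
  (∀ g : Gle n, g.val = 0 → ∀ y : cl Y g, ∃ x : cl X g, fapp f g x = y) ∧
  (∀ (j k : Gle n) (hj : j.val + 1 = k.val) (a b : cl X j), Par a b →
     ∀ c : cl Y k, csrc (show j.val < k.val by omega) c = fapp f j a →
       ctgt (show j.val < k.val by omega) c = fapp f j b →
       ∃ e : cl X k, csrc (show j.val < k.val by omega) e = a ∧
         ctgt (show j.val < k.val by omega) e = b ∧ fapp f k e = c) ∧
  (∀ k : Gle n, ¬ inR n (k.val + 1) → ∀ a b : cl X k, Par a b →
     fapp f k a = fapp f k b → a = b)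

/-- `f` is a fibration: it has the right lifting property with respect to the set `J` of
source maps `σ_k : D_k → D_{k+1}`, expressed elementwise. -/
def InjJ {Th : GlobTheory n} {X Y : Mod Th} (f : X ⟶ Y) : Prop :=
  ∀ (j k : Gle n) (hj : j.val + 1 = k.val) (a : cl X j) (c : cl Y k),
    csrc (show j.val < k.val by omega) c = fapp f j a →
    ∃ e : cl X k, csrc (show j.val < k.val by omega) e = a ∧ fapp f k e = c

/-- Right lifting property against the target maps `τ_k : D_k → D_{k+1}`, elementwise. -/
def InjJtau {Th : GlobTheory n} {X Y : Mod Th} (f : X ⟶ Y) : Prop :=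
  ∀ (j k : Gle n) (hj : j.val + 1 = k.val) (a : cl X j) (c : cl Y k),
    ctgt (show j.val < k.val by omega) c = fapp f j a →
    ∃ e : cl X k, ctgt (show j.val < k.val by omega) e = a ∧ fapp f k e = c

/-- Cofibrations: maps with the left lifting property against all trivial fibrations. -/
def IsCofib {Th : GlobTheory n} {A B : Mod Th} (l : A ⟶ B) : Prop :=
  ∀ {P Q : Mod Th} (r : P ⟶ Q), InjI r → SqLift l r

/-- Maps in the saturation of `J`: maps with the left lifting property against all
fibrations. -/
def IsTrivCofib {Th : GlobTheory n} {A B : Mod Th} (l : A ⟶ B) : Prop :=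
  ∀ {P Q : Mod Th} (r : P ⟶ Q), InjJ r → SqLift l r

/-- An object is fibrant if the unique map to the terminal object is a fibration
(elementwise formulation). -/
def FibrantObj {Th : GlobTheory n} (X : Mod Th) : Prop :=
  ∀ (j k : Gle n) (hj : j.val + 1 = k.val) (a : cl X j),
    ∃ e : cl X k, csrc (show j.val < k.val by omega) e = a

/-- An object is contractible if the unique map to the terminal object is a trivial
fibration (elementwise formulation). -/
def ContractibleObj {Th : GlobTheory n} (X : Mod Th) : Prop :=
  (∀ g : Gle n, g.val = 0 → Nonempty (cl X g)) ∧
  (∀ (j k : Gle n) (hj : j.val + 1 = k.val) (a b : cl X j), Par a b →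
     ∃ e : cl X k, csrc (show j.val < k.val by omega) e = a ∧
       ctgt (show j.val < k.val by omega) e = b) ∧
  (∀ k : Gle n, ¬ inR n (k.val + 1) → ∀ a b : cl X k, Par a b → a = b)

/-- The class `W` of weak equivalences: `f : X → Y` is in `W` when every commutative
square from a boundary inclusion `S^{k-1} → D_k` to `f` admits a lift of the top which is a
lift up to homotopy of the bottom (expressed elementwise; at the top dimension, for finite
`n`, "up to homotopy" means equality). -/
def WHtpy {Th : GlobTheory n} {X Y : Mod Th} (f : X ⟶ Y) {k : Gle n}
    (e : cl X k) (c : cl Y k) : Prop :=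
  (∀ (k' : Gle n) (hk' : k.val + 1 = k'.val),
      ∃ H : cl Y k', csrc (show k.val < k'.val by omega) H = fapp f k e ∧
        ctgt (show k.val < k'.val by omega) H = c) ∧
  (inR n (k.val + 1) ∨ fapp f k e = c)

def IsWeq {Th : GlobTheory n} {X Y : Mod Th} (f : X ⟶ Y) : Prop :=
  (∀ g : Gle n, g.val = 0 → ∀ c : cl Y g, ∃ e : cl X g, WHtpy f e c) ∧
  (∀ (j k : Gle n) (hj : j.val + 1 = k.val) (a b : cl X j), Par a b →
     ∀ c : cl Y k, csrc (show j.val < k.val by omega) c = fapp f j a →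
       ctgt (show j.val < k.val by omega) c = fapp f j b →
       ∃ e : cl X k, csrc (show j.val < k.val by omega) e = a ∧
         ctgt (show j.val < k.val by omega) e = b ∧ WHtpy f e c)

/-- `f` is a retract of `g` in the arrow category. -/
def IsRetractOf {Th : GlobTheory n} {X Y W Z : Mod Th} (f : X ⟶ Y) (g : W ⟶ Z) : Prop :=
  ∃ (a : X ⟶ W) (b : W ⟶ X) (c : Y ⟶ Z) (d : Z ⟶ Y),
    a ≫ b = 𝟙 X ∧ c ≫ d = 𝟙 Y ∧ a ≫ g = f ≫ c ∧ g ≫ d = b ≫ f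

/-- The initial (empty) model. -/
def emptyMod (Th : GlobTheory n) : Mod Th :=
  ⟨(Functor.const _).obj PEmpty, fun _ fam _ => PEmpty.elim (Pts.head fam)⟩

/-- The unique map out of the empty model. -/
def emptyTo {Th : GlobTheory n} (X : Mod Th) : emptyMod Th ⟶ X where
  hom :=
  { app := fun Z => TypeCat.ofHom (PEmpty.elim : PEmpty → X.obj.obj Z)
    naturality := by intro Z Z' h; ext x; exact PEmpty.elim x }

/-- An object is cofibrant if the map from the initial model is a cofibration. -/
def CofObj {Th : GlobTheory n} (X : Mod Th) : Prop := IsCofib (emptyTo X)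

/-- The path-object datum used in the recognition theorem: a fibration `PX → X × X`
whose composites with the two projections are trivial fibrations.  A map to a product is
given by its two components; the fibration condition for the induced map to the product is
expressed elementwise. -/
def PairFib {Th : GlobTheory n} {PX X : Mod Th} (e₀ e₁ : PX ⟶ X) : Prop :=
  ∀ (j k : Gle n) (hj : j.val + 1 = k.val) (a : cl PX j) (c₀ c₁ : cl X k),
    csrc (show j.val < k.val by omega) c₀ = fapp e₀ j a →
    csrc (show j.val < k.val by omega) c₁ = fapp e₁ j a →
    ∃ e : cl PX k, csrc (show j.val < k.val by omega) e = a ∧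
      fapp e₀ k e = c₀ ∧ fapp e₁ k e = c₁
/-! ## The semi-model structure package

The content of a cofibrantly generated semi-model structure (Fresse §12.1) with weak
equivalences `W`, generating cofibrations the boundary inclusions and generating trivial
cofibrations the source maps, in which every object is fibrant and globular sums are
contractible. -/

def SemiModelPackage (Th : GlobTheory n) : Prop :=
  -- two-out-of-three for the weak equivalences
  (∀ {X Y Z : Mod Th} (f : X ⟶ Y) (g : Y ⟶ Z), IsWeq f → IsWeq g → IsWeq (f ≫ g)) ∧
  (∀ {X Y Z : Mod Th} (f : X ⟶ Y) (g : Y ⟶ Z), IsWeq g → IsWeq (f ≫ g) → IsWeq f) ∧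
  (∀ {X Y Z : Mod Th} (f : X ⟶ Y) (g : Y ⟶ Z), IsWeq f → IsWeq (f ≫ g) → IsWeq g) ∧
  -- weak equivalences are closed under retracts
  (∀ {X Y W Z : Mod Th} (f : X ⟶ Y) (g : W ⟶ Z), IsRetractOf f g → IsWeq g → IsWeq f) ∧
  -- trivial fibrations are exactly the fibrations which are weak equivalences
  (∀ {X Y : Mod Th} (f : X ⟶ Y), InjI f ↔ InjJ f ∧ IsWeq f) ∧
  -- (cofibration, trivial fibration) factorizations
  (∀ {X Y : Mod Th} (f : X ⟶ Y),
      ∃ (Z : Mod Th) (i : X ⟶ Z) (p : Z ⟶ Y), IsCofib i ∧ InjI p ∧ i ≫ p = f) ∧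
  -- (trivial cofibration, fibration) factorizations for maps with cofibrant domain
  (∀ {X Y : Mod Th} (f : X ⟶ Y), CofObj X →
      ∃ (Z : Mod Th) (i : X ⟶ Z) (p : Z ⟶ Y), IsCofib i ∧ IsWeq i ∧ InjJ p ∧ i ≫ p = f) ∧
  -- trivial cofibrations with cofibrant domain lift against fibrations
  (∀ {X Y : Mod Th} (i : X ⟶ Y), CofObj X → IsCofib i → IsWeq i →
      ∀ {P Q : Mod Th} (p : P ⟶ Q), InjJ p → SqLift i p) ∧
  -- every object is fibrant
  (∀ X : Mod Th, FibrantObj X) ∧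
  -- globular sums are contractible
  (∀ A : Th.E, ContractibleObj (dModA Th A))

/-! ## The boundary of a globular sum

For a table `T` of dimension `m > 0`, the boundary table is obtained by replacing every top
entry equal to `m` by `m - 1`, and collapsing the degenerate stretches so created (runs of
`m`'s separated by `m - 1`'s collapse to a single `m - 1`). -/

def bH (m h : ℕ) : ℕ := min h (m - 1)

def bL (m : ℕ) : List (ℕ × ℕ) → List (ℕ × ℕ)
  | [] => []
  | (i', j) :: l => if i' = m - 1 then bL m l else (i', bH m j) :: bL m l

def Bnd (m : ℕ) (l : List (ℕ × ℕ)) : Prop := ∀ p ∈ l, p.2 ≤ m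

theorem le_maxL : ∀ (l : List (ℕ × ℕ)), ∀ p ∈ l, p.2 ≤ maxL l := by
  intro l
  induction l with
  | nil => intro p hp; simp at hp
  | cons q l ih =>
    intro p hp
    rcases List.mem_cons.mp hp with h | h
    · subst h; simp [maxL]
    · calc p.2 ≤ maxL l := ih p h
        _ ≤ maxL (q :: l) := by simp [maxL]

theorem head_le_dim (T : DimTable n) : T.head ≤ T.dim := le_max_left _ _

theorem bnd_dim (T : DimTable n) : Bnd T.dim T.rest := fun p hp =>
  le_trans (le_maxL T.rest p hp) (le_max_right _ _)

theorem tv_bdry (m : ℕ) :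
    ∀ (h : ℕ) (l : List (ℕ × ℕ)), TV n h l → h ≤ m → Bnd m l → TV n (bH m h) (bL m l) := by
  intro h l
  induction l generalizing h with
  | nil =>
    intro v hh _
    exact le_trans (Nat.cast_le.mpr (min_le_left h (m - 1))) v
  | cons p l ih =>
    obtain ⟨i', j⟩ := p
    intro v hh hb
    by_cases hd : i' = m - 1
    · have hbl : bL m ((i', j) :: l) = bL m l := by simp [bL, hd]
      have hm : h = m := by have h1 := v.2.1; omega
      have hjm : j = m := by
        have h1 := v.2.2.1
        have h2 := hb (i', j) (List.mem_cons_self)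
        simp at h2
        omega
      rw [hbl, show bH m h = bH m j by rw [hm, hjm]]
      exact ih j v.2.2.2 (by omega) (fun p hp => hb p (List.mem_cons_of_mem _ hp))
    · have hbl : bL m ((i', j) :: l) = (i', bH m j) :: bL m l := by simp [bL, hd]
      rw [hbl]
      have h1 := v.2.1
      have h2 := v.2.2.1
      have h3 := hb (i', j) (List.mem_cons_self)
      simp at h3
      refine ⟨le_trans (Nat.cast_le.mpr (min_le_left h (m - 1))) v.1, ?_, ?_, ?_⟩
      · simp only [bH]; omega
      · simp only [bH]; omega
      · exact ih j v.2.2.2 (by omega) (fun p hp => hb p (List.mem_cons_of_mem _ hp))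

/-- The boundary table of a table. -/
def DimTable.bdry (T : DimTable n) : DimTable n :=
  ⟨bH T.dim T.head, bL T.dim T.rest,
    tv_bdry T.dim T.head T.rest T.valid (head_le_dim T) (bnd_dim T)⟩

section BdryLegs

variable {C : Type*} [Category C] (G : Gle n ⥤ C) (X : C)

/-- Transport of legs along an equality of head dimensions. -/
def legsCast {h h' : ℕ} (e : h = h') {l : List (ℕ × ℕ)} {v : TV n h l} {v' : TV n h' l}
    (L : Pts (fun g => G.obj g ⟶ X) h' l v') : Pts (fun g => G.obj g ⟶ X) h l v := by
  subst e; exact L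

/-- The legs of the cocone exhibiting the source-boundary map `∂_σ : ∂A → A`: on each
component of the boundary, it is given by (capped) cosource maps into the *first* component
of the corresponding run of top-dimensional components of `A`. -/
def srcLegs (m : ℕ) :
    ∀ (h : ℕ) (l : List (ℕ × ℕ)) (v : TV n h l), h ≤ m → Bnd m l →
      ∀ v' : TV n (bH m h) (bL m l),
        Pts (fun g => G.obj g ⟶ X) h l v → Pts (fun g => G.obj g ⟶ X) (bH m h) (bL m l) v' := by
  intro h l
  induction l generalizing h with
  | nil =>
    intro v hh hb v' f
    exact G.map (sge (a := ⟨bH m h, v'⟩) (b := ⟨h, v⟩) (min_le_left _ _)) ≫ f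
  | cons p l ih =>
    obtain ⟨i', j⟩ := p
    intro v hh hb v' fs
    by_cases hd : i' = m - 1
    · have hm : h = m := by have h1 := v.2.1; omega
      have hjm : j = m := by
        have h1 := v.2.2.1
        have h2 := hb (i', j) (List.mem_cons_self)
        simp at h2
        omega
      have hbl : bL m ((i', j) :: l) = bL m l := by simp [bL, hd]
      have hhj : bH m h = bH m j := by rw [hm, hjm]
      revert v'
      rw [hbl, hhj]
      intro v'
      exact Pts.setHead (ih j v.2.2.2 (le_of_eq hjm) (fun p hp => hb p (List.mem_cons_of_mem _ hp)) v' fs.2)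
        (G.map (sge (a := ⟨bH m j, TV.headLe v'⟩) (b := ⟨h, v.1⟩)
          (show bH m j ≤ h from hhj ▸ min_le_left h (m - 1))) ≫ fs.1)
    · have hbl : bL m ((i', j) :: l) = (i', bH m j) :: bL m l := by simp [bL, hd]
      have h3 := hb (i', j) (List.mem_cons_self)
      simp at h3
      revert v'
      rw [hbl]
      intro v' 
      exact ⟨G.map (sge (a := ⟨bH m h, v'.1⟩) (b := ⟨h, v.1⟩) (min_le_left _ _)) ≫ fs.1,
        ih j v.2.2.2 (by omega) (fun p hp => hb p (List.mem_cons_of_mem _ hp)) v'.2.2.2 fs.2⟩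

/-- The legs of the cocone exhibiting the target-boundary map `∂_τ : ∂A → A`: given by
(capped) cotarget maps into the *last* component of the corresponding run. -/
def tgtLegs (m : ℕ) :
    ∀ (h : ℕ) (l : List (ℕ × ℕ)) (v : TV n h l), h ≤ m → Bnd m l →
      ∀ v' : TV n (bH m h) (bL m l),
        Pts (fun g => G.obj g ⟶ X) h l v → Pts (fun g => G.obj g ⟶ X) (bH m h) (bL m l) v' := by
  intro h l
  induction l generalizing h with
  | nil =>
    intro v hh hb v' f
    exact G.map (tge (a := ⟨bH m h, v'⟩) (b := ⟨h, v⟩) (min_le_left _ _)) ≫ f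
  | cons p l ih =>
    obtain ⟨i', j⟩ := p
    intro v hh hb v' fs
    by_cases hd : i' = m - 1
    · have hm : h = m := by have h1 := v.2.1; omega
      have hjm : j = m := by
        have h1 := v.2.2.1
        have h2 := hb (i', j) (List.mem_cons_self)
        simp at h2
        omega
      have hbl : bL m ((i', j) :: l) = bL m l := by simp [bL, hd]
      have hhj : bH m h = bH m j := by rw [hm, hjm]
      revert v'
      rw [hbl, hhj]
      intro v'
      exact ih j v.2.2.2 (le_of_eq hjm) (fun p hp => hb p (List.mem_cons_of_mem _ hp)) v' fs.2
    · have hbl : bL m ((i', j) :: l) = (i', bH m j) :: bL m l := by simp [bL, hd]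
      have h3 := hb (i', j) (List.mem_cons_self)
      simp at h3
      revert v'
      rw [hbl]
      intro v'
      exact ⟨G.map (tge (a := ⟨bH m h, v'.1⟩) (b := ⟨h, v.1⟩) (min_le_left _ _)) ≫ fs.1,
        ih j v.2.2.2 (by omega) (fun p hp => hb p (List.mem_cons_of_mem _ hp)) v'.2.2.2 fs.2⟩

end BdryLegs

/-- The canonical σ-boundary cocone legs (on the boundary table) with values in a globular
sum. -/
def bdrySrcLegs (Th : GlobTheory n) (T : DimTable n) :
    Pts (fun g => Th.G.obj g ⟶ (Th.sum T).pt) T.bdry.head T.bdry.rest T.bdry.valid :=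
  srcLegs Th.G (Th.sum T).pt T.dim T.head T.rest T.valid (head_le_dim T) (bnd_dim T)
    T.bdry.valid (Th.sum T).legs

def bdryTgtLegs (Th : GlobTheory n) (T : DimTable n) :
    Pts (fun g => Th.G.obj g ⟶ (Th.sum T).pt) T.bdry.head T.bdry.rest T.bdry.valid :=
  tgtLegs Th.G (Th.sum T).pt T.dim T.head T.rest T.valid (head_le_dim T) (bnd_dim T)
    T.bdry.valid (Th.sum T).legs

/-- `p` is the boundary map `∂_σ : ∂A → A` induced by the cosource maps `σ`. -/
def IsBdrySrcMap (Th : GlobTheory n) (T : DimTable n)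
    (p : (Th.sum T.bdry).pt ⟶ (Th.sum T).pt) : Prop :=
  (Th.sum T.bdry).post p = bdrySrcLegs Th T

/-- `p` is the boundary map `∂_τ : ∂A → A` induced by the cotarget maps `τ`. -/
def IsBdryTgtMap (Th : GlobTheory n) (T : DimTable n)
    (p : (Th.sum T.bdry).pt ⟶ (Th.sum T).pt) : Prop :=
  (Th.sum T.bdry).post p = bdryTgtLegs Th T
/-! ## Morphisms of globular theories

A morphism of globular theories is a functor commuting strictly with the structural functors
from `Θ₀`, i.e. with the coglobular objects and with the chosen globular sums. -/

structure TheoryHom (A B : GlobTheory n) where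
  H : A.E ⥤ B.E
  comm : A.G ⋙ H = B.G
  sum_obj : ∀ T : DimTable n, H.obj (A.sum T).pt = (B.sum T).pt
  sum_legs : ∀ T : DimTable n,
    Pts.mapP (fun _ (f : _ ⟶ (A.sum T).pt) => H.map f) (A.sum T).legs =
    Pts.mapP (fun g (f : B.G.obj g ⟶ (B.sum T).pt) =>
        eqToHom (Functor.congr_obj comm g) ≫ f ≫ eqToHom (sum_obj T).symm) (B.sum T).legs

def TheoryHom.comp {A B C : GlobTheory n} (φ : TheoryHom A B) (ψ : TheoryHom B C) :
    TheoryHom A C where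
  H := φ.H ⋙ ψ.H
  comm := by rw [← Functor.assoc, φ.comm, ψ.comm]
  sum_obj T := by
    show ψ.H.obj (φ.H.obj (A.sum T).pt) = _
    rw [φ.sum_obj T, ψ.sum_obj T]
  sum_legs T := by
    have e1 := congrArg (Pts.mapP (fun _ (f : _ ⟶ φ.H.obj (A.sum T).pt) => ψ.H.map f))
      (φ.sum_legs T)
    simp only [Pts.mapP_mapP] at e1
    have e2 := congrArg (Pts.mapP (fun g (f : ψ.H.obj (B.G.obj g) ⟶ ψ.H.obj (B.sum T).pt) =>
        eqToHom (show ψ.H.obj (φ.H.obj (A.G.obj g)) = ψ.H.obj (B.G.obj g) from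
          congrArg ψ.H.obj (Functor.congr_obj φ.comm g)) ≫ f ≫
        eqToHom (congrArg ψ.H.obj (φ.sum_obj T)).symm)) (ψ.sum_legs T)
    simp only [Pts.mapP_mapP] at e2
    exact e1.trans ((Pts.mapP_ext (fun g a => by simp [eqToHom_map]) _).trans
      (e2.trans (Pts.mapP_ext (fun g a => by simp) _)))

/-- Θ₀ is, up to isomorphism, the initial globular theory. -/
def IsInitialTheory (A : GlobTheory n) : Prop :=
  ∀ B : GlobTheory n, Nonempty (TheoryHom A B) ∧ ∀ f g : TheoryHom A B, f = g

/-- A pair of operations `f, g : D_k → A` in a theory. -/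
structure PairOver (Th : GlobTheory n) where
  k : Gle n
  A : Th.E
  f : Th.G.obj k ⟶ A
  g : Th.G.obj k ⟶ A

/-- The pair is parallel: either `k = 0`, or the two maps agree after precomposition with
the cosource and the cotarget. -/
def PairOver.Parallel {Th : GlobTheory n} (p : PairOver Th) : Prop :=
  ∀ (j : Gle n) (hj : j.val + 1 = p.k.val),
    Th.G.map (sg (show j.val < p.k.val by omega)) ≫ p.f =
      Th.G.map (sg (show j.val < p.k.val by omega)) ≫ p.g ∧
    Th.G.map (tg (show j.val < p.k.val by omega)) ≫ p.f =
      Th.G.map (tg (show j.val < p.k.val by omega)) ≫ p.g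

/-- Transport of a pair along a theory morphism. -/
def TheoryHom.mapPair {A B : GlobTheory n} (φ : TheoryHom A B) (p : PairOver A) :
    PairOver B where
  k := p.k
  A := φ.H.obj p.A
  f := eqToHom (Functor.congr_obj φ.comm p.k).symm ≫ φ.H.map p.f
  g := eqToHom (Functor.congr_obj φ.comm p.k).symm ≫ φ.H.map p.g

/-- A filler (lift) of a parallel pair. -/
structure Filler {Th : GlobTheory n} (p : PairOver Th) (k' : Gle n)
    (hk' : p.k.val + 1 = k'.val) where
  h : Th.G.obj k' ⟶ p.A
  hs : Th.G.map (sg (show p.k.val < k'.val by omega)) ≫ h = p.f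
  ht : Th.G.map (tg (show p.k.val < k'.val by omega)) ≫ h = p.g

/-- `φ : A → A'` exhibits `A'` as the theory obtained from `A` by freely adjoining fillers
for the pairs in `X` (of non-maximal dimension) and equalizing the pairs of `X` of top
dimension (Prop. "universal property of globular theories"). -/
def IsFreeExt {A A' : GlobTheory n} (φ : TheoryHom A A') (X : Set (PairOver A)) : Prop :=
  (∀ p ∈ X, ¬ inR n (p.k.val + 1) → (φ.mapPair p).f = (φ.mapPair p).g) ∧
  ∃ hat : ∀ p ∈ X, ∀ (k' : Gle n) (hk' : p.k.val + 1 = k'.val), Filler (φ.mapPair p) k' hk',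
    ∀ (D : GlobTheory n) (F₀ : TheoryHom A D),
      (∀ p ∈ X, ¬ inR n (p.k.val + 1) → (F₀.mapPair p).f = (F₀.mapPair p).g) →
      ∀ ch : ∀ p ∈ X, ∀ (k' : Gle n) (hk' : p.k.val + 1 = k'.val), Filler (F₀.mapPair p) k' hk',
        ∃! H : TheoryHom A' D, φ.comp H = F₀ ∧
          ∀ (p : PairOver A) (hp : p ∈ X) (k' : Gle n) (hk' : p.k.val + 1 = k'.val),
            HEq (H.H.map (hat p hp k' hk').h) ((ch p hp k' hk').h)

/-- `Th` is the colimit of the tower `Tw` in the category of globular theories. -/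
def IsTowerColimit (Tw : ℕ → GlobTheory n) (st : ∀ m, TheoryHom (Tw m) (Tw (m + 1)))
    (Th : GlobTheory n) : Prop :=
  ∃ coc : ∀ m, TheoryHom (Tw m) Th,
    (∀ m, (st m).comp (coc (m + 1)) = coc m) ∧
    ∀ (B : GlobTheory n) (d : ∀ m, TheoryHom (Tw m) B),
      (∀ m, (st m).comp (d (m + 1)) = d m) →
      ∃! K : TheoryHom Th B, ∀ m, (coc m).comp K = d m

/-- Cellularity of a globular theory with respect to a notion of admissible pairs:
`Th` is the colimit of a tower starting at `Θ₀` in which each stage is freely generated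
over the previous one by fillers for a family of admissible pairs. -/
def CellularTheory (adm : ∀ Th' : GlobTheory n, PairOver Th' → Prop)
    (Th : GlobTheory n) : Prop :=
  ∃ (Tw : ℕ → GlobTheory n) (st : ∀ m, TheoryHom (Tw m) (Tw (m + 1))),
    IsInitialTheory (Tw 0) ∧
    (∀ m, ∃ X : Set (PairOver (Tw m)),
        (∀ p ∈ X, p.Parallel ∧ adm (Tw m) p) ∧ IsFreeExt (st m) X) ∧
    IsTowerColimit Tw st Th

/-- Contractibility of a globular theory with respect to a notion of admissible pairs:
every admissible parallel pair of non-maximal dimension has a filler, and admissible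
parallel pairs of maximal dimension are equal. -/
def ContractibleTheory (adm : ∀ Th' : GlobTheory n, PairOver Th' → Prop)
    (Th : GlobTheory n) : Prop :=
  ∀ p : PairOver Th, p.Parallel → adm Th p →
    (∀ (k' : Gle n) (hk' : p.k.val + 1 = k'.val), Nonempty (Filler p k' hk')) ∧
    (¬ inR n (p.k.val + 1) → p.f = p.g)

/-- `dim A ≤ d`, expressed via the (unique) table presenting `A`. -/
def DimLeObj (Th : GlobTheory n) (A : Th.E) (d : ℕ) : Prop :=
  ∀ T : DimTable n, (Th.sum T).pt = A → T.dim ≤ d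

/-- Admissible pairs in the groupoidal sense: `dim A ≤ k + 1`. -/
def AdmGpd (Th : GlobTheory n) (p : PairOver Th) : Prop :=
  DimLeObj Th p.A (p.k.val + 1)

/-- A coherator for `n`-groupoids: a contractible and cellular `n`-globular theory (with
respect to groupoid-admissible pairs). -/
def IsGpdCoherator (Th : GlobTheory n) : Prop :=
  ContractibleTheory AdmGpd Th ∧ CellularTheory AdmGpd Th
/-! ## Homogeneous maps and coherators for `n`-categories -/

/-- The globular maps of a theory: the image of `Θ₀`, i.e. the smallest class of maps
containing the identities, the coglobular maps and the cocone inclusions of the globular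
sums, and closed under composition and under the induction of maps out of globular sums. -/
inductive IsGlobularMap (Th : GlobTheory n) : ∀ {A B : Th.E}, (A ⟶ B) → Prop where
  | id (A : Th.E) : IsGlobularMap Th (𝟙 A)
  | comp {A B C : Th.E} {f : A ⟶ B} {g : B ⟶ C} :
      IsGlobularMap Th f → IsGlobularMap Th g → IsGlobularMap Th (f ≫ g)
  | coglob {a b : Gle n} (f : a ⟶ b) : IsGlobularMap Th (Th.G.map f)
  | leg (T : DimTable n) (q : Σ g : Gle n, Th.G.obj g ⟶ (Th.sum T).pt)
      (hq : q ∈ Pts.toSet (Th.sum T).legs) : IsGlobularMap Th q.2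
  | induced (T : DimTable n) {B : Th.E}
      (fs : Pts (fun g => Th.G.obj g ⟶ B) T.head T.rest T.valid)
      (hok : PtsOk (fun a b hab f => Th.G.map (sg hab) ≫ f)
        (fun a b hab f => Th.G.map (tg hab) ≫ f) fs)
      (hg : ∀ q ∈ Pts.toSet fs, IsGlobularMap Th q.2)
      (f : (Th.sum T).pt ⟶ B) (hf : (Th.sum T).post f = fs) :
      IsGlobularMap Th f

/-- `f` is homogeneous: in every factorization `f = f' ≫ g` with `g` globular, `g` is an
identity. -/
def IsHomog (Th : GlobTheory n) {A B : Th.E} (f : A ⟶ B) : Prop :=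
  ∀ {M : Th.E} (f' : A ⟶ M) (g : M ⟶ B), f = f' ≫ g → IsGlobularMap Th g →
    ∃ e : M = B, g = eqToHom e

/-- Admissible pairs for a theory of `n`-categories: `k = 0`, or both maps homogeneous, or
both factor through homogeneous maps into the boundary `∂A` along `∂_σ` resp. `∂_τ`. -/
def AdmCat (Th : GlobTheory n) (p : PairOver Th) : Prop :=
  p.k.val = 0 ∨ (IsHomog Th p.f ∧ IsHomog Th p.g) ∨
  ∃ (T : DimTable n) (hA : (Th.sum T).pt = p.A), 0 < T.dim ∧
    ∃ (pσ pτ : (Th.sum T.bdry).pt ⟶ (Th.sum T).pt),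
      IsBdrySrcMap Th T pσ ∧ IsBdryTgtMap Th T pτ ∧
      ∃ (f' g' : Th.G.obj p.k ⟶ (Th.sum T.bdry).pt),
        IsHomog Th f' ∧ IsHomog Th g' ∧
        p.f = f' ≫ pσ ≫ eqToHom hA ∧ p.g = g' ≫ pτ ≫ eqToHom hA

/-- Contractibility with *unique* fillers (with respect to categorically admissible pairs);
this characterizes the theory `Θ` of strict higher categories among globular theories. -/
def IsStrictThetaCat (Th : GlobTheory n) : Prop :=
  (∀ p : PairOver Th, p.Parallel → AdmCat Th p →
    (∀ (k' : Gle n) (hk' : p.k.val + 1 = k'.val),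
        ∃! h : Th.G.obj k' ⟶ p.A,
          Th.G.map (sg (show p.k.val < k'.val by omega)) ≫ h = p.f ∧
          Th.G.map (tg (show p.k.val < k'.val by omega)) ≫ h = p.g) ∧
    (¬ inR n (p.k.val + 1) → p.f = p.g)) ∧
  CellularTheory AdmCat Th

/-- The theory is homogeneous: it is equipped with a globular-sums preserving functor to the
theory of strict `n`-categories which detects homogeneous maps. -/
def HomogeneousStr (Th : GlobTheory n) : Prop :=
  ∃ (Θ' : GlobTheory n) (Hm : TheoryHom Th Θ'), IsStrictThetaCat Θ' ∧
    ∀ {A B : Th.E} (f : A ⟶ B), IsHomog Th f ↔ IsHomog Θ' (Hm.H.map f)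

/-- A coherator for `n`-categories: a contractible, cellular, homogeneous `n`-globular
theory with respect to categorically admissible pairs. -/
def IsCatCoherator (Th : GlobTheory n) : Prop :=
  HomogeneousStr Th ∧ ContractibleTheory AdmCat Th ∧ CellularTheory AdmCat Th

/-! ## `m`-bijective and `m`-fully faithful maps of models -/

/-- A morphism of models is `m`-bijective if it is bijective on `k`-cells for all `k ≤ m`. -/
def MBijMod {Th : GlobTheory n} (m : ℕ) {X Y : Mod Th} (f : X ⟶ Y) : Prop :=
  ∀ g : Gle n, g.val ≤ m → Function.Bijective (fapp f g)

/-- A morphism of models is `m`-fully faithful if for all `i ≥ m` the square of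
`(i+1)`-cells over pairs of parallel `i`-cells is cartesian (elementwise formulation). -/
def MFFMod {Th : GlobTheory n} (m : ℕ) {X Y : Mod Th} (f : X ⟶ Y) : Prop :=
  ∀ (j k : Gle n) (hj : j.val + 1 = k.val), m ≤ j.val →
    ∀ (y : cl Y k) (xs xt : cl X j),
      fapp f j xs = csrc (show j.val < k.val by omega) y →
      fapp f j xt = ctgt (show j.val < k.val by omega) y →
      ∃! x : cl X k, fapp f k x = y ∧ csrc (show j.val < k.val by omega) x = xs ∧
        ctgt (show j.val < k.val by omega) x = xt

/-! ## Systems of compositions, identities and inverses -/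

/-- The table presenting the globular sum `D_k ⨿_{D_{k-1}} D_k`. -/
def pairTab (k : ℕ) (h1 : 1 ≤ k) (hk : inR n k) : DimTable n :=
  ⟨k, [(k - 1, k)], ⟨hk, by omega, by omega, hk⟩⟩

/-- The globular sum `D_k ⨿_{D_{k-1}} D_k` in a theory. -/
def cPt (Th : GlobTheory n) (k : ℕ) (h1 : 1 ≤ k) (hk : inR n k) : Th.E :=
  (Th.sum (pairTab k h1 hk)).pt

/-- The cocone inclusion whose cosource face is glued. -/
def cInclS (Th : GlobTheory n) (k : ℕ) (h1 : 1 ≤ k) (hk : inR n k) :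
    Th.D k hk ⟶ cPt Th k h1 hk :=
  (Th.sum (pairTab k h1 hk)).legs.1

/-- The cocone inclusion whose cotarget face is glued. -/
def cInclT (Th : GlobTheory n) (k : ℕ) (h1 : 1 ≤ k) (hk : inR n k) :
    Th.D k hk ⟶ cPt Th k h1 hk :=
  (Th.sum (pairTab k h1 hk)).legs.2

/-- A system of compositions and a system of identities (with unit constraints) on a
globular theory; for finite `n` the unit constraints in dimension `n + 1` are equations. -/
structure SysCI (Th : GlobTheory n) where
  /-- binary compositions `c_k : D_k → D_k ⨿_{D_{k-1}} D_k`, `1 ≤ k ≤ n` -/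
  c : ∀ (k : ℕ) (h1 : 1 ≤ k) (hk : inR n k), Th.D k hk ⟶ cPt Th k h1 hk
  c_s : ∀ (k : ℕ) (h1 : 1 ≤ k) (hk : inR n k) (j : ℕ) (hj : j + 1 = k) (hjn : inR n j),
    Th.G.map (sg (a := ⟨j, hjn⟩) (b := ⟨k, hk⟩) (show j < k by omega)) ≫ c k h1 hk =
      Th.G.map (sg (a := ⟨j, hjn⟩) (b := ⟨k, hk⟩) (show j < k by omega)) ≫ cInclT Th k h1 hk
  c_t : ∀ (k : ℕ) (h1 : 1 ≤ k) (hk : inR n k) (j : ℕ) (hj : j + 1 = k) (hjn : inR n j),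
    Th.G.map (tg (a := ⟨j, hjn⟩) (b := ⟨k, hk⟩) (show j < k by omega)) ≫ c k h1 hk =
      Th.G.map (tg (a := ⟨j, hjn⟩) (b := ⟨k, hk⟩) (show j < k by omega)) ≫ cInclS Th k h1 hk
  /-- identities `id_k : D_{k+1} → D_k`, `0 ≤ k ≤ n - 1` -/
  idm : ∀ (k k' : ℕ) (hk' : k + 1 = k') (hn : inR n k') (hkn : inR n k),
    Th.D k' hn ⟶ Th.D k hkn
  idm_s : ∀ (k k' : ℕ) (hk' : k + 1 = k') (hn : inR n k') (hkn : inR n k),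
    Th.G.map (sg (a := ⟨k, hkn⟩) (b := ⟨k', hn⟩) (show k < k' by omega)) ≫ idm k k' hk' hn hkn = 𝟙 _
  idm_t : ∀ (k k' : ℕ) (hk' : k + 1 = k') (hn : inR n k') (hkn : inR n k),
    Th.G.map (tg (a := ⟨k, hkn⟩) (b := ⟨k', hn⟩) (show k < k' by omega)) ≫ idm k k' hk' hn hkn = 𝟙 _
  /-- left unit constraints `l_k : D_k → D_{k-1}`, `2 ≤ k ≤ n` -/
  lu : ∀ (i j k : ℕ) (hi : i + 1 = j) (hj : j + 1 = k) (hk : inR n k) (hjn : inR n j),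
    Th.D k hk ⟶ Th.D j hjn
  lu_s : ∀ (i j k : ℕ) (hi : i + 1 = j) (hj : j + 1 = k) (hk : inR n k) (hjn : inR n j),
    Th.G.map (sg (a := ⟨j, hjn⟩) (b := ⟨k, hk⟩) (show j < k by omega)) ≫ lu i j k hi hj hk hjn = 𝟙 _
  lu_t : ∀ (i j k : ℕ) (hi : i + 1 = j) (hj : j + 1 = k) (hk : inR n k) (hjn : inR n j)
      (hin : inR n i) (h1 : 1 ≤ j),
    ∃ u : cPt Th j h1 hjn ⟶ Th.D j hjn,
      cInclS Th j h1 hjn ≫ u =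
        idm i j hi hjn hin ≫ Th.G.map (tg (a := ⟨i, hin⟩) (b := ⟨j, hjn⟩) (show i < j by omega)) ∧
      cInclT Th j h1 hjn ≫ u = 𝟙 _ ∧
      Th.G.map (tg (a := ⟨j, hjn⟩) (b := ⟨k, hk⟩) (show j < k by omega)) ≫ lu i j k hi hj hk hjn =
        c j h1 hjn ≫ u
  /-- right unit constraints `r_k : D_k → D_{k-1}`, `2 ≤ k ≤ n` -/
  ru : ∀ (i j k : ℕ) (hi : i + 1 = j) (hj : j + 1 = k) (hk : inR n k) (hjn : inR n j),
    Th.D k hk ⟶ Th.D j hjn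
  ru_s : ∀ (i j k : ℕ) (hi : i + 1 = j) (hj : j + 1 = k) (hk : inR n k) (hjn : inR n j),
    Th.G.map (sg (a := ⟨j, hjn⟩) (b := ⟨k, hk⟩) (show j < k by omega)) ≫ ru i j k hi hj hk hjn = 𝟙 _
  ru_t : ∀ (i j k : ℕ) (hi : i + 1 = j) (hj : j + 1 = k) (hk : inR n k) (hjn : inR n j)
      (hin : inR n i) (h1 : 1 ≤ j),
    ∃ u : cPt Th j h1 hjn ⟶ Th.D j hjn,
      cInclS Th j h1 hjn ≫ u = 𝟙 _ ∧
      cInclT Th j h1 hjn ≫ u =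
        idm i j hi hjn hin ≫ Th.G.map (sg (a := ⟨i, hin⟩) (b := ⟨j, hjn⟩) (show i < j by omega)) ∧
      Th.G.map (tg (a := ⟨j, hjn⟩) (b := ⟨k, hk⟩) (show j < k by omega)) ≫ ru i j k hi hj hk hjn =
        c j h1 hjn ≫ u
  /-- the unit constraints in dimension `n + 1` (for finite `n`) become equations -/
  lu_top : ∀ (i j : ℕ) (hi : i + 1 = j) (hjn : inR n j) (hin : inR n i) (h1 : 1 ≤ j),
    ¬ inR n (j + 1) →
    ∃ u : cPt Th j h1 hjn ⟶ Th.D j hjn,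
      cInclS Th j h1 hjn ≫ u =
        idm i j hi hjn hin ≫ Th.G.map (tg (a := ⟨i, hin⟩) (b := ⟨j, hjn⟩) (show i < j by omega)) ∧
      cInclT Th j h1 hjn ≫ u = 𝟙 _ ∧
      𝟙 (Th.D j hjn) = c j h1 hjn ≫ u
  ru_top : ∀ (i j : ℕ) (hi : i + 1 = j) (hjn : inR n j) (hin : inR n i) (h1 : 1 ≤ j),
    ¬ inR n (j + 1) →
    ∃ u : cPt Th j h1 hjn ⟶ Th.D j hjn,
      cInclS Th j h1 hjn ≫ u = 𝟙 _ ∧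
      cInclT Th j h1 hjn ≫ u =
        idm i j hi hjn hin ≫ Th.G.map (sg (a := ⟨i, hin⟩) (b := ⟨j, hjn⟩) (show i < j by omega)) ∧
      𝟙 (Th.D j hjn) = c j h1 hjn ≫ u

/-- A system of left and right inverses relative to chosen systems of compositions and
identities. -/
structure SysInv (Th : GlobTheory n) (s : SysCI Th) where
  /-- left and right inverse operations `i^l_k, i^r_k : D_k → D_k`, exchanging source and
  target -/
  il : ∀ (k : ℕ) (h1 : 1 ≤ k) (hk : inR n k), Th.D k hk ⟶ Th.D k hk
  ir : ∀ (k : ℕ) (h1 : 1 ≤ k) (hk : inR n k), Th.D k hk ⟶ Th.D k hk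
  il_s : ∀ (k : ℕ) (h1 : 1 ≤ k) (hk : inR n k) (j : ℕ) (hj : j + 1 = k) (hjn : inR n j),
    Th.G.map (sg (a := ⟨j, hjn⟩) (b := ⟨k, hk⟩) (show j < k by omega)) ≫ il k h1 hk =
      Th.G.map (tg (a := ⟨j, hjn⟩) (b := ⟨k, hk⟩) (show j < k by omega))
  il_t : ∀ (k : ℕ) (h1 : 1 ≤ k) (hk : inR n k) (j : ℕ) (hj : j + 1 = k) (hjn : inR n j),
    Th.G.map (tg (a := ⟨j, hjn⟩) (b := ⟨k, hk⟩) (show j < k by omega)) ≫ il k h1 hk =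
      Th.G.map (sg (a := ⟨j, hjn⟩) (b := ⟨k, hk⟩) (show j < k by omega))
  ir_s : ∀ (k : ℕ) (h1 : 1 ≤ k) (hk : inR n k) (j : ℕ) (hj : j + 1 = k) (hjn : inR n j),
    Th.G.map (sg (a := ⟨j, hjn⟩) (b := ⟨k, hk⟩) (show j < k by omega)) ≫ ir k h1 hk =
      Th.G.map (tg (a := ⟨j, hjn⟩) (b := ⟨k, hk⟩) (show j < k by omega))
  ir_t : ∀ (k : ℕ) (h1 : 1 ≤ k) (hk : inR n k) (j : ℕ) (hj : j + 1 = k) (hjn : inR n j),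
    Th.G.map (tg (a := ⟨j, hjn⟩) (b := ⟨k, hk⟩) (show j < k by omega)) ≫ ir k h1 hk =
      Th.G.map (sg (a := ⟨j, hjn⟩) (b := ⟨k, hk⟩) (show j < k by omega))
  /-- the witnesses `k^l_k, k^r_k : D_k → D_{k-1}`, `2 ≤ k ≤ n`, relating the composite of a
  cell with its left (resp. right) inverse to an identity cell -/
  kl : ∀ (i j k : ℕ) (hi : i + 1 = j) (hj : j + 1 = k) (hk : inR n k) (hjn : inR n j),
    Th.D k hk ⟶ Th.D j hjn
  kl_s : ∀ (i j k : ℕ) (hi : i + 1 = j) (hj : j + 1 = k) (hk : inR n k) (hjn : inR n j)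
      (hin : inR n i),
    Th.G.map (sg (a := ⟨j, hjn⟩) (b := ⟨k, hk⟩) (show j < k by omega)) ≫ kl i j k hi hj hk hjn =
      s.idm i j hi hjn hin ≫ Th.G.map (sg (a := ⟨i, hin⟩) (b := ⟨j, hjn⟩) (show i < j by omega))
  kl_t : ∀ (i j k : ℕ) (hi : i + 1 = j) (hj : j + 1 = k) (hk : inR n k) (hjn : inR n j)
      (h1 : 1 ≤ j),
    ∃ u : cPt Th j h1 hjn ⟶ Th.D j hjn,
      cInclS Th j h1 hjn ≫ u = il j h1 hjn ∧
      cInclT Th j h1 hjn ≫ u = 𝟙 _ ∧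
      Th.G.map (tg (a := ⟨j, hjn⟩) (b := ⟨k, hk⟩) (show j < k by omega)) ≫ kl i j k hi hj hk hjn =
        s.c j h1 hjn ≫ u
  kr : ∀ (i j k : ℕ) (hi : i + 1 = j) (hj : j + 1 = k) (hk : inR n k) (hjn : inR n j),
    Th.D k hk ⟶ Th.D j hjn
  kr_s : ∀ (i j k : ℕ) (hi : i + 1 = j) (hj : j + 1 = k) (hk : inR n k) (hjn : inR n j)
      (hin : inR n i),
    Th.G.map (sg (a := ⟨j, hjn⟩) (b := ⟨k, hk⟩) (show j < k by omega)) ≫ kr i j k hi hj hk hjn =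
      s.idm i j hi hjn hin ≫ Th.G.map (tg (a := ⟨i, hin⟩) (b := ⟨j, hjn⟩) (show i < j by omega))
  kr_t : ∀ (i j k : ℕ) (hi : i + 1 = j) (hj : j + 1 = k) (hk : inR n k) (hjn : inR n j)
      (h1 : 1 ≤ j),
    ∃ u : cPt Th j h1 hjn ⟶ Th.D j hjn,
      cInclS Th j h1 hjn ≫ u = 𝟙 _ ∧
      cInclT Th j h1 hjn ≫ u = ir j h1 hjn ∧
      Th.G.map (tg (a := ⟨j, hjn⟩) (b := ⟨k, hk⟩) (show j < k by omega)) ≫ kr i j k hi hj hk hjn =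
        s.c j h1 hjn ≫ u
  /-- the witnesses in dimension `n + 1` (for finite `n`) become equations -/
  kl_top : ∀ (i j : ℕ) (hi : i + 1 = j) (hjn : inR n j) (hin : inR n i) (h1 : 1 ≤ j),
    ¬ inR n (j + 1) →
    ∃ u : cPt Th j h1 hjn ⟶ Th.D j hjn,
      cInclS Th j h1 hjn ≫ u = il j h1 hjn ∧
      cInclT Th j h1 hjn ≫ u = 𝟙 _ ∧
      s.idm i j hi hjn hin ≫ Th.G.map (sg (a := ⟨i, hin⟩) (b := ⟨j, hjn⟩) (show i < j by omega)) =
        s.c j h1 hjn ≫ u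
  kr_top : ∀ (i j : ℕ) (hi : i + 1 = j) (hjn : inR n j) (hin : inR n i) (h1 : 1 ≤ j),
    ¬ inR n (j + 1) →
    ∃ u : cPt Th j h1 hjn ⟶ Th.D j hjn,
      cInclS Th j h1 hjn ≫ u = 𝟙 _ ∧
      cInclT Th j h1 hjn ≫ u = ir j h1 hjn ∧
      s.idm i j hi hjn hin ≫ Th.G.map (tg (a := ⟨i, hin⟩) (b := ⟨j, hjn⟩) (show i < j by omega)) =
        s.c j h1 hjn ≫ u

/-- A theory morphism maps a chosen system of compositions and identities to another. -/
def MapsSysCI {A B : GlobTheory n} (φ : TheoryHom A B) (sA : SysCI A) (sB : SysCI B) :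
    Prop :=
  (∀ (k : ℕ) (h1 : 1 ≤ k) (hk : inR n k),
    φ.H.map (sA.c k h1 hk) =
      eqToHom (Functor.congr_obj φ.comm ⟨k, hk⟩) ≫ sB.c k h1 hk ≫
        eqToHom (φ.sum_obj (pairTab k h1 hk)).symm) ∧
  (∀ (k k' : ℕ) (hk' : k + 1 = k') (hn : inR n k') (hkn : inR n k),
    φ.H.map (sA.idm k k' hk' hn hkn) =
      eqToHom (Functor.congr_obj φ.comm ⟨k', hn⟩) ≫ sB.idm k k' hk' hn hkn ≫
        eqToHom (Functor.congr_obj φ.comm ⟨k, hkn⟩).symm) ∧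
  (∀ (i j k : ℕ) (hi : i + 1 = j) (hj : j + 1 = k) (hk : inR n k) (hjn : inR n j),
    φ.H.map (sA.lu i j k hi hj hk hjn) =
      eqToHom (Functor.congr_obj φ.comm ⟨k, hk⟩) ≫ sB.lu i j k hi hj hk hjn ≫
        eqToHom (Functor.congr_obj φ.comm ⟨j, hjn⟩).symm) ∧
  (∀ (i j k : ℕ) (hi : i + 1 = j) (hj : j + 1 = k) (hk : inR n k) (hjn : inR n j),
    φ.H.map (sA.ru i j k hi hj hk hjn) =
      eqToHom (Functor.congr_obj φ.comm ⟨k, hk⟩) ≫ sB.ru i j k hi hj hk hjn ≫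
        eqToHom (Functor.congr_obj φ.comm ⟨j, hjn⟩).symm)

/-- A theory morphism maps a chosen system of inverses to another. -/
def MapsSysInv {A B : GlobTheory n} (φ : TheoryHom A B) {sA : SysCI A} {sB : SysCI B}
    (iA : SysInv A sA) (iB : SysInv B sB) : Prop :=
  (∀ (k : ℕ) (h1 : 1 ≤ k) (hk : inR n k),
    φ.H.map (iA.il k h1 hk) =
      eqToHom (Functor.congr_obj φ.comm ⟨k, hk⟩) ≫ iB.il k h1 hk ≫
        eqToHom (Functor.congr_obj φ.comm ⟨k, hk⟩).symm) ∧
  (∀ (k : ℕ) (h1 : 1 ≤ k) (hk : inR n k),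
    φ.H.map (iA.ir k h1 hk) =
      eqToHom (Functor.congr_obj φ.comm ⟨k, hk⟩) ≫ iB.ir k h1 hk ≫
        eqToHom (Functor.congr_obj φ.comm ⟨k, hk⟩).symm) ∧
  (∀ (i j k : ℕ) (hi : i + 1 = j) (hj : j + 1 = k) (hk : inR n k) (hjn : inR n j),
    φ.H.map (iA.kl i j k hi hj hk hjn) =
      eqToHom (Functor.congr_obj φ.comm ⟨k, hk⟩) ≫ iB.kl i j k hi hj hk hjn ≫
        eqToHom (Functor.congr_obj φ.comm ⟨j, hjn⟩).symm) ∧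
  (∀ (i j k : ℕ) (hi : i + 1 = j) (hj : j + 1 = k) (hk : inR n k) (hjn : inR n j),
    φ.H.map (iA.kr i j k hi hj hk hjn) =
      eqToHom (Functor.congr_obj φ.comm ⟨k, hk⟩) ≫ iB.kr i j k hi hj hk hjn ≫
        eqToHom (Functor.congr_obj φ.comm ⟨j, hjn⟩).symm)

/-- `ι : C → CW`, together with a transported system of compositions/identities `sW` and a
system of inverses `iW`, exhibits `CW` as the theory `C^W`: the pushout of `C` and the free
theory on a system of compositions, identities, and left and right inverses, along the free
theory on a system of compositions and identities.  By the universal properties of the free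
theories, this pushout is characterized by: morphisms `CW → D` correspond bijectively to
morphisms `C → D` together with a system of inverses on `D` relative to the transported
compositions and identities. -/
def IsWClosure {Cth CW : GlobTheory n} (ι : TheoryHom Cth CW) (sC : SysCI Cth)
    (sW : SysCI CW) (iW : SysInv CW sW) : Prop :=
  MapsSysCI ι sC sW ∧
  ∀ (D : GlobTheory n) (H : TheoryHom Cth D) (sD : SysCI D) (iD : SysInv D sD),
    MapsSysCI H sC sD →
    ∃! K : TheoryHom CW D, ι.comp K = H ∧ MapsSysCI K sW sD ∧ MapsSysInv K iW iD
/-! ## Composition and identity of cells in a model; the models `𝕀_k` -/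

/-- The codimension-1 boundary globe of a globe. -/
def mid1 (j : Gle n) (h1 : 1 ≤ j.val) : Gle n :=
  ⟨j.val - 1, le_trans (Nat.cast_le.mpr (Nat.sub_le _ _)) j.isLe⟩

/-- Binary composition of cells of a model, using a chosen system of compositions. -/
noncomputable def pairCell {Th : GlobTheory n} (s : SysCI Th) (X : Mod Th)
    {j : Gle n} (h1 : 1 ≤ j.val) (a b : cl X j)
    (hab : csrc (a := mid1 j h1) (b := j) (show j.val - 1 < j.val by omega) a =
      ctgt (a := mid1 j h1) (b := j) (show j.val - 1 < j.val by omega) b) : cl X j :=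
  X.obj.map (op (s.c j.val h1 j.isLe))
    ((X.property (pairTab j.val h1 j.isLe) (a, b) ⟨hab, trivial⟩).choose)

/-- The identity cell on a cell of codimension 1, via a chosen system of identities. -/
def idCell1 {Th : GlobTheory n} (s : SysCI Th) (X : Mod Th) {j : Gle n} (h1 : 1 ≤ j.val)
    (x : cl X (mid1 j h1)) : cl X j :=
  X.obj.map (op (s.idm (j.val - 1) j.val (by omega) j.isLe
    (le_trans (Nat.cast_le.mpr (Nat.sub_le _ _)) j.isLe))) x

/-- The generating data of the model `𝕀_j`: a `j`-cell `f`, two `j`-cells `g, k` in the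
opposite direction, and two `(j+1)`-cells relating (via the chosen compositions and
identities) the composite of `f` with `g`, and of `k` with `f`, to identity cells. -/
structure InvWitness {Th : GlobTheory n} (s : SysCI Th) (X : Mod Th) (j k : Gle n)
    (h1 : 1 ≤ j.val) (hjk : j.val + 1 = k.val) where
  f : cl X j
  g : cl X j
  kk : cl X j
  e1 : csrc (a := mid1 j h1) (show j.val - 1 < j.val by omega) g =
    ctgt (a := mid1 j h1) (show j.val - 1 < j.val by omega) f
  e2 : ctgt (a := mid1 j h1) (show j.val - 1 < j.val by omega) g =
    csrc (a := mid1 j h1) (show j.val - 1 < j.val by omega) f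
  e3 : csrc (a := mid1 j h1) (show j.val - 1 < j.val by omega) kk =
    ctgt (a := mid1 j h1) (show j.val - 1 < j.val by omega) f
  e4 : ctgt (a := mid1 j h1) (show j.val - 1 < j.val by omega) kk =
    csrc (a := mid1 j h1) (show j.val - 1 < j.val by omega) f
  H₁ : cl X k
  H₂ : cl X k
  h1s : csrc (show j.val < k.val by omega) H₁ = pairCell s X h1 f g e2.symm
  h1t : ctgt (show j.val < k.val by omega) H₁ =
    idCell1 s X h1 (csrc (a := mid1 j h1) (show j.val - 1 < j.val by omega) g)
  h2s : csrc (show j.val < k.val by omega) H₂ = pairCell s X h1 kk f e3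
  h2t : ctgt (show j.val < k.val by omega) H₂ =
    idCell1 s X h1 (csrc (a := mid1 j h1) (show j.val - 1 < j.val by omega) f)

/-- `I` (with its witness `w`) is the model `𝕀_j` freely generated by the data of an
`InvWitness`. -/
def IsFreeInv {Th : GlobTheory n} (s : SysCI Th) (I : Mod Th) {j k : Gle n}
    {h1 : 1 ≤ j.val} {hjk : j.val + 1 = k.val} (w : InvWitness s I j k h1 hjk) : Prop :=
  ∀ (Y : Mod Th) (w' : InvWitness s Y j k h1 hjk),
    ∃! φ : I ⟶ Y, fapp φ j w.f = w'.f ∧ fapp φ j w.g = w'.g ∧ fapp φ j w.kk = w'.kk ∧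
      fapp φ k w.H₁ = w'.H₁ ∧ fapp φ k w.H₂ = w'.H₂

/-- The map `α_j : D_j → 𝕀_j` selecting the generating cell `f`. -/
noncomputable def invIncl {Th : GlobTheory n} (s : SysCI Th) {I : Mod Th} {j k : Gle n}
    {h1 : 1 ≤ j.val} {hjk : j.val + 1 = k.val} (w : InvWitness s I j k h1 hjk) :
    dMod Th j ⟶ I :=
  ObjectProperty.homMk (yonedaEquiv.symm w.f)

/-- The index family for the generating maps `α_k : D_k → 𝕀_k` (`k ≥ 1`). -/
structure AlphaIdx (Th : GlobTheory n) (s : SysCI Th) where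
  j : Gle n
  k : Gle n
  h1 : 1 ≤ j.val
  hjk : j.val + 1 = k.val
  I : Mod Th
  w : InvWitness s I j k h1 hjk
  free : IsFreeInv s I w

/-- The family `α_k : D_k → 𝕀_k`. -/
noncomputable def alphaGen (Th : GlobTheory n) (s : SysCI Th) (x : AlphaIdx Th s) :
    dMod Th x.j ⟶ x.I :=
  invIncl s x.w

/-! ## Transfinite composites of pushouts of a family of maps -/

theorem ord_lt_succ (o : Ordinal) : o < o + 1 := by
  rw [Ordinal.add_one_eq_succ]
  exact Order.lt_succ o

universe w

/-- A presentation of `f : X ⟶ Y` as a transfinite composite of pushouts of the maps of the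
family `gen`. -/
structure CellPres {M : Type*} [Category M] {ι : Type*} {Ai Bi : ι → M}
    (gen : ∀ i : ι, Ai i ⟶ Bi i) {X Y : M} (f : X ⟶ Y) where
  len : Ordinal.{w}
  F : ∀ o : Ordinal, o ≤ len → M
  mp : ∀ (o o' : Ordinal) (ho : o ≤ o') (h' : o' ≤ len), F o (ho.trans h') ⟶ F o' h'
  mp_id : ∀ (o : Ordinal) (h : o ≤ len), mp o o le_rfl h = 𝟙 _
  mp_comp : ∀ (o₁ o₂ o₃ : Ordinal) (h12 : o₁ ≤ o₂) (h23 : o₂ ≤ o₃) (h3 : o₃ ≤ len),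
    mp o₁ o₃ (h12.trans h23) h3 = mp o₁ o₂ h12 (h23.trans h3) ≫ mp o₂ o₃ h23 h3
  bot : F 0 zero_le = X
  /-- each successor step is a pushout of one of the generating maps -/
  succ : ∀ (o : Ordinal) (h : o + 1 ≤ len),
    ∃ (i : ι) (u : Ai i ⟶ F o ((ord_lt_succ o).le.trans h)) (v : Bi i ⟶ F (o + 1) h),
      IsPushout (gen i) u v (mp o (o + 1) (ord_lt_succ o).le h)
  /-- at limit stages the chain is colimiting -/
  limit : ∀ (o : Ordinal) (ho : o ≤ len), Order.IsSuccLimit o →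
    ∀ (Z : M) (legs : ∀ (o' : Ordinal) (h' : o' < o), F o' (h'.le.trans ho) ⟶ Z),
      (∀ (o₁ o₂ : Ordinal) (h12 : o₁ ≤ o₂) (h2 : o₂ < o),
        mp o₁ o₂ h12 (h2.le.trans ho) ≫ legs o₂ h2 = legs o₁ (lt_of_le_of_lt h12 h2)) →
      ∃! w : F o ho ⟶ Z, ∀ (o' : Ordinal) (h' : o' < o),
        mp o' o h'.le ho ≫ w = legs o' h'
  topEq : F len le_rfl = Y
  comp_eq : eqToHom bot.symm ≫ mp 0 len zero_le le_rfl ≫ eqToHom topEq = f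
/-! # Statement 3

Let `𝔇` be a direct category and `𝔈` a cocomplete category with classes `(L, R)` such that
`L` has the left lifting property against `R`.  Then the class `L^𝔇` of natural
transformations whose latching maps lie in `L` has the left lifting property against the
class `R^𝔇` of pointwise-`R` natural transformations in the functor category `[𝔇, 𝔈]`. -/

section Statement3

open CategoryTheory.Limits

variable {D : Type} [Category.{0} D] {E : Type*} [Category E]

/-- A direct category structure: a degree function into the ordinals such that the
existence of a non-identity morphism `a → b` forces `deg a < deg b` (in particular all
endomorphisms are identities). -/
structure DirectStruct (D : Type) [Category.{0} D] where
  deg : D → Ordinal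
  lt_of_ne : ∀ {a b : D}, (a ⟶ b) → a ≠ b → deg a < deg b
  endo_id : ∀ {a : D} (f : a ⟶ a), f = 𝟙 a

variable (δ : DirectStruct D) [HasColimitsOfSize.{0, 0} E]

/-- The category of objects of degree `< deg c` over `c`. -/
abbrev Below (c : D) := ObjectProperty.FullSubcategory (fun f : Over c => δ.deg f.left < δ.deg c)

/-- The diagram whose colimit is the latching object. -/
def belowDiag (c : D) (X : D ⥤ E) : Below δ c ⥤ E :=
  ObjectProperty.ι _ ⋙ Over.forget c ⋙ X

/-- The latching object `L_c(X)`. -/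
noncomputable def LObj (c : D) (X : D ⥤ E) : E := colimit (belowDiag δ c X)

/-- Functoriality of the latching object. -/
noncomputable def LMap (c : D) {X Y : D ⥤ E} (α : X ⟶ Y) : LObj δ c X ⟶ LObj δ c Y :=
  colimMap (Functor.whiskerLeft (ObjectProperty.ι _ ⋙ Over.forget c) α)

/-- The canonical map `ε_c : L_c(X) → X(c)`. -/
noncomputable def LEps (c : D) (X : D ⥤ E) : LObj δ c X ⟶ X.obj c :=
  colimit.desc (belowDiag δ c X)
    { pt := X.obj c
      ι :=
        { app := fun f => X.map f.obj.hom
          naturality := fun f g mm => by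
            simp only [belowDiag, Functor.comp_map, Functor.const_obj_map, Category.comp_id,
              Functor.const_obj_obj]
            exact (X.map_comp _ _).symm.trans (congrArg X.map (Over.w mm.hom)) } }

theorem LSquare (c : D) {X Y : D ⥤ E} (α : X ⟶ Y) :
    LMap δ c α ≫ LEps δ c Y = LEps δ c X ≫ α.app c := by
  apply colimit.hom_ext
  intro f
  simp only [LMap, LEps, ι_colimMap_assoc, colimit.ι_desc, colimit.ι_desc_assoc]
  erw [ι_colimMap_assoc, colimit.ι_desc, colimit.ι_desc_assoc]
  exact (α.naturality f.obj.hom).symm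

/-- The latching map `L̂_c(α) : X(c) ⨿_{L_c X} L_c Y → Y(c)` of a natural transformation. -/
noncomputable def latchMap (c : D) {X Y : D ⥤ E} (α : X ⟶ Y) :
    pushout (LEps δ c X) (LMap δ c α) ⟶ Y.obj c :=
  pushout.desc (α.app c) (LEps δ c Y) (LSquare δ c α).symm

section Aux3

variable {X Y P Q : D ⥤ E} (α : X ⟶ Y) (β : P ⟶ Q) (u : X ⟶ P) (v : Y ⟶ Q)

/-- A coherent family of partial lifts below `c`. -/
def GoodFam (c : D) (g : ∀ b, δ.deg b < δ.deg c → (Y.obj b ⟶ P.obj b)) : Prop :=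
  (∀ b hb, α.app b ≫ g b hb = u.app b ∧ g b hb ≫ β.app b = v.app b) ∧
  (∀ (b₁ b₂ : D) (f : b₁ ⟶ b₂) (h1 : δ.deg b₁ < δ.deg c) (h2 : δ.deg b₂ < δ.deg c),
     Y.map f ≫ g b₂ h2 = g b₁ h1 ≫ P.map f)

theorem exists_step (Lc Rc : MorphismProperty E)
    (hLR : ∀ {A B P Q : E} (l : A ⟶ B) (r : P ⟶ Q), Lc l → Rc r →
      ∀ (u : A ⟶ P) (v : B ⟶ Q), u ≫ r = l ≫ v →
        ∃ d : B ⟶ P, l ≫ d = u ∧ d ≫ r = v)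
    (hα : ∀ c : D, Lc (latchMap δ c α)) (hβ : ∀ c : D, Rc (β.app c))
    (hsq : u ≫ β = α ≫ v) (c : D)
    (g : ∀ b, δ.deg b < δ.deg c → (Y.obj b ⟶ P.obj b))
    (hg : GoodFam δ α β u v c g) :
    ∃ dc : Y.obj c ⟶ P.obj c,
      α.app c ≫ dc = u.app c ∧ dc ≫ β.app c = v.app c ∧
      ∀ (b : D) (f : b ⟶ c) (hb : δ.deg b < δ.deg c),
        Y.map f ≫ dc = g b hb ≫ P.map f := by
  -- the cocone on the latching diagram of `Y` given by the lower family
  let cc : Cocone (belowDiag δ c Y) :=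
    { pt := P.obj c
      ι :=
        { app := fun f => g f.obj.left f.property ≫ P.map f.obj.hom
          naturality := fun f f' mm => by
            simp only [belowDiag, Functor.comp_map, Functor.const_obj_map, Category.comp_id,
              Functor.const_obj_obj, ObjectProperty.ι_map, Over.forget_map, Over.forget_obj]
            erw [← Category.assoc, hg.2 _ _ mm.hom.left f.property f'.property, Category.assoc,
              ← P.map_comp]
            congr 2
            exact Over.w mm.hom } }
  let w : LObj δ c Y ⟶ P.obj c := colimit.desc _ cc
  have hw : ∀ f : Below δ c, colimit.ι (belowDiag δ c Y) f ≫ w =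
      g f.obj.left f.property ≫ P.map f.obj.hom := fun f => colimit.ι_desc cc f
  have hcomm : LEps δ c X ≫ u.app c = LMap δ c α ≫ w := by
    apply colimit.hom_ext
    intro f
    have e1 : colimit.ι (belowDiag δ c X) f ≫ LEps δ c X = X.map f.obj.hom := by
      simp [LEps]
      rfl
    have e2 : colimit.ι (belowDiag δ c X) f ≫ LMap δ c α =
        α.app f.obj.left ≫ colimit.ι (belowDiag δ c Y) f := by
      exact ι_colimMap _ _
    have e3 : X.map f.obj.hom ≫ u.app c = u.app f.obj.left ≫ P.map f.obj.hom :=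
      u.naturality f.obj.hom
    erw [← Category.assoc, e1, ← Category.assoc, e2, Category.assoc, hw f,
      ← Category.assoc, (hg.1 f.obj.left f.property).1]
    exact e3
  let t : pushout (LEps δ c X) (LMap δ c α) ⟶ P.obj c := pushout.desc (u.app c) w hcomm
  have hsq' : t ≫ β.app c = latchMap δ c α ≫ v.app c := by
    apply pushout.hom_ext
    · simp only [t, latchMap, pushout.inl_desc_assoc]
      have := congrArg (fun η : X ⟶ Q => η.app c) hsq
      simpa using this
    · simp only [t, latchMap, pushout.inr_desc_assoc]
      apply colimit.hom_ext
      intro f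
      have e1 : colimit.ι (belowDiag δ c Y) f ≫ LEps δ c Y = Y.map f.obj.hom := by
        simp [LEps]
        rfl
      have e4 : P.map f.obj.hom ≫ β.app c = β.app f.obj.left ≫ Q.map f.obj.hom :=
        β.naturality f.obj.hom
      have e5 : Y.map f.obj.hom ≫ v.app c = v.app f.obj.left ≫ Q.map f.obj.hom :=
        v.naturality f.obj.hom
      erw [← Category.assoc, hw f, Category.assoc, e4, ← Category.assoc,
        (hg.1 f.obj.left f.property).2, ← Category.assoc, e1, e5]
      rfl
  obtain ⟨dc, hd1, hd2⟩ := hLR (latchMap δ c α) (β.app c) (hα c) (hβ c) t (v.app c) hsq'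
  refine ⟨dc, ?_, hd2, ?_⟩
  · have : pushout.inl _ _ ≫ latchMap δ c α ≫ dc = pushout.inl _ _ ≫ t := by rw [hd1]
    simpa only [latchMap, pushout.inl_desc_assoc, pushout.inl_desc, t] using this
  · intro b f hb
    let fo : Below δ c := ⟨Over.mk f, hb⟩
    have h1 : colimit.ι (belowDiag δ c Y) fo ≫ LEps δ c Y = Y.map f := by
      simp [LEps]
      rfl
    have h2 : pushout.inr _ _ ≫ latchMap δ c α = LEps δ c Y := by
      simp only [latchMap]
      exact pushout.inr_desc _ _ _
    have k1 : Y.map f ≫ dc = colimit.ι (belowDiag δ c Y) fo ≫ LEps δ c Y ≫ dc := by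
      erw [← Category.assoc, h1]
      rfl
    have k2 : LEps δ c Y ≫ dc = w := by
      rw [← h2, Category.assoc, hd1]
      exact pushout.inr_desc _ _ _
    erw [k1, k2, hw fo]
    rfl

theorem deg_wf : WellFounded (fun a b : D => δ.deg a < δ.deg b) :=
  InvImage.wf δ.deg Ordinal.lt_wf

/-- The canonical partial lift, defined by well-founded recursion on the degree. -/
noncomputable def d0 (Lc Rc : MorphismProperty E)
    (hLR : ∀ {A B P Q : E} (l : A ⟶ B) (r : P ⟶ Q), Lc l → Rc r →
      ∀ (u : A ⟶ P) (v : B ⟶ Q), u ≫ r = l ≫ v →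
        ∃ d : B ⟶ P, l ≫ d = u ∧ d ≫ r = v)
    (hα : ∀ c : D, Lc (latchMap δ c α)) (hβ : ∀ c : D, Rc (β.app c))
    (hsq : u ≫ β = α ≫ v) : ∀ c : D, Option (Y.obj c ⟶ P.obj c) :=
  open Classical in
  WellFounded.fix (deg_wf δ)
    (fun c rec =>
      if h : ∃ g : ∀ b, δ.deg b < δ.deg c → (Y.obj b ⟶ P.obj b),
          (∀ b hb, rec b hb = some (g b hb)) ∧ GoodFam δ α β u v c g then
        some (Classical.choose
          (exists_step δ α β u v Lc Rc hLR hα hβ hsq c h.choose h.choose_spec.2))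
      else none)

theorem d0_spec (Lc Rc : MorphismProperty E)
    (hLR : ∀ {A B P Q : E} (l : A ⟶ B) (r : P ⟶ Q), Lc l → Rc r →
      ∀ (u : A ⟶ P) (v : B ⟶ Q), u ≫ r = l ≫ v →
        ∃ d : B ⟶ P, l ≫ d = u ∧ d ≫ r = v)
    (hα : ∀ c : D, Lc (latchMap δ c α)) (hβ : ∀ c : D, Rc (β.app c))
    (hsq : u ≫ β = α ≫ v) :
    ∀ c : D, ∃ dc : Y.obj c ⟶ P.obj c,
      d0 δ α β u v Lc Rc hLR hα hβ hsq c = some dc ∧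
      α.app c ≫ dc = u.app c ∧ dc ≫ β.app c = v.app c ∧
      ∀ (b : D) (f : b ⟶ c) (hb : δ.deg b < δ.deg c) (db : Y.obj b ⟶ P.obj b),
        d0 δ α β u v Lc Rc hLR hα hβ hsq b = some db → Y.map f ≫ dc = db ≫ P.map f := by
  classical
  intro c
  induction c using (deg_wf δ).induction with
  | _ c IH =>
  -- unfold d0 at c
  have hunfold : d0 δ α β u v Lc Rc hLR hα hβ hsq c =
      if h : ∃ g : ∀ b, δ.deg b < δ.deg c → (Y.obj b ⟶ P.obj b),
          (∀ b hb, d0 δ α β u v Lc Rc hLR hα hβ hsq b = some (g b hb)) ∧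
            GoodFam δ α β u v c g then
        some (Classical.choose
          (exists_step δ α β u v Lc Rc hLR hα hβ hsq c h.choose h.choose_spec.2))
      else none := by
    exact WellFounded.fix_eq (deg_wf δ) _ c
  have hcond : ∃ g : ∀ b, δ.deg b < δ.deg c → (Y.obj b ⟶ P.obj b),
      (∀ b hb, d0 δ α β u v Lc Rc hLR hα hβ hsq b = some (g b hb)) ∧
        GoodFam δ α β u v c g := by
    refine ⟨fun b hb => (IH b hb).choose, fun b hb => (IH b hb).choose_spec.1, ?_, ?_⟩
    · exact fun b hb => ⟨(IH b hb).choose_spec.2.1, (IH b hb).choose_spec.2.2.1⟩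
    · intro b₁ b₂ f h1 h2
      by_cases hbe : b₁ = b₂
      · subst hbe
        rw [δ.endo_id f]
        simp
      · exact (IH b₂ h2).choose_spec.2.2.2 b₁ f (δ.lt_of_ne f hbe) _ (IH b₁ h1).choose_spec.1
  rw [dif_pos hcond] at hunfold
  set g := hcond.choose with hgdef
  have hgs : ∀ b hb, d0 δ α β u v Lc Rc hLR hα hβ hsq b = some (g b hb) :=
    hcond.choose_spec.1
  obtain ⟨h1, h2, h3⟩ := Classical.choose_spec
    (exists_step δ α β u v Lc Rc hLR hα hβ hsq c hcond.choose hcond.choose_spec.2)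
  refine ⟨_, hunfold, h1, h2, ?_⟩
  intro b f hb db hdb
  have : db = g b hb := by
    have := (hgs b hb).symm.trans hdb
    exact (Option.some.injEq _ _ ▸ this).symm
  rw [this]
  exact h3 b f hb

end Aux3

/-- If `L` is weakly left orthogonal to `R` in `𝔈`, then the maps with
latching maps in `L` lift against the pointwise-`R` maps in `[𝔇, 𝔈]`. -/
theorem statement3 (Lc Rc : MorphismProperty E)
    (hLR : ∀ {A B P Q : E} (l : A ⟶ B) (r : P ⟶ Q), Lc l → Rc r →
      ∀ (u : A ⟶ P) (v : B ⟶ Q), u ≫ r = l ≫ v →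
        ∃ d : B ⟶ P, l ≫ d = u ∧ d ≫ r = v) :
    ∀ {X Y P Q : D ⥤ E} (α : X ⟶ Y) (β : P ⟶ Q),
      (∀ c : D, Lc (latchMap δ c α)) → (∀ c : D, Rc (β.app c)) →
      ∀ (u : X ⟶ P) (v : Y ⟶ Q), u ≫ β = α ≫ v →
        ∃ d : Y ⟶ P, α ≫ d = u ∧ d ≫ β = v := by
  intro X Y P Q α β hα hβ u v hsq
  have spec := d0_spec δ α β u v Lc Rc hLR hα hβ hsq
  refine ⟨{ app := fun c => (spec c).choose, naturality := ?_ }, ?_, ?_⟩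
  · intro a b f
    by_cases hab : a = b
    · subst hab; rw [δ.endo_id f]; simp
    · exact (spec b).choose_spec.2.2.2 a f (δ.lt_of_ne f hab) _ (spec a).choose_spec.1
  · ext c; simpa using (spec c).choose_spec.2.1
  · ext c; simpa using (spec c).choose_spec.2.2.1

end Statement3
end GPaper
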